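/- arXiv:1503.08481 — 7 statements merged into one kernel-verified Lean document; each statement's English description precedes it below -/
import Mathlib

section
/- The convex hull of a set G in ℝ^N equals the set of all convex combinations of N+1 points of G (Carathéodory's theorem), and consequently if Graph(C) ⊆ E × E has closed graph with E compact, then the set-valued map x ↦ conv(closure(Graph(C))_x) also has closed graph. -/
/-!
By Carathéodory every point of a convex hull in dimension `n` is a convex combination of exactly
`n + 1` points (repetitions allowed). Hence the graph of `x ↦ conv {y | (x, y) ∈ S}` is the
projection to `X × V` of the closed set of tuples `(x, y, α, w)` with `α` in the standard simplex,
`(x, wᵢ) ∈ S` and `y = ∑ αᵢ wᵢ`; when `S` lies in `X × K` with `K` compact, the `(α, w)` factor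
ranges over a compact space, so that projection is a closed map.
-/

open Function Set

theorem convexHull_eq_setOf_sum_fin_succ {𝕜 V : Type*} [Field 𝕜] [LinearOrder 𝕜]
    [IsStrictOrderedRing 𝕜] [AddCommGroup V] [Module 𝕜 V] [FiniteDimensional 𝕜 V]
    {n : ℕ} (hn : Module.finrank 𝕜 V ≤ n) (G : Set V) :
    convexHull 𝕜 G =
      {y | ∃ (w : Fin (n + 1) → V) (α : Fin (n + 1) → 𝕜),
        (∀ i, w i ∈ G) ∧ (∀ i, 0 ≤ α i) ∧ (∑ i, α i) = 1 ∧ y = ∑ i, α i • w i} := by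
  ext y
  constructor
  · intro hy
    obtain ⟨ι, _, z, α, hzG, hz_indep, hα_pos, hα_sum, rfl⟩ :=
      eq_pos_convex_span_of_mem_convexHull hy
    obtain ⟨i₀⟩ : Nonempty ι :=
      Finset.univ_nonempty_iff.mp (Finset.nonempty_of_sum_ne_zero (hα_sum ▸ one_ne_zero))
    have hcard : Fintype.card ι ≤ Fintype.card (Fin (n + 1)) := by
      have hspan := (Submodule.finrank_le (vectorSpan 𝕜 (range z))).trans hn
      have hindep := hz_indep.card_le_finrank_succ
      simp only [Fintype.card_fin]
      omega
    -- Pad the combination to `n + 1` terms with zero weights on copies of `z i₀`.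
    obtain ⟨e, he⟩ := Function.Embedding.nonempty_of_card_le hcard
    have hwG : range (extend e z fun _ => z i₀) ⊆ G :=
      (range_extend_subset _ _ _).trans <|
        union_subset hzG (image_subset_iff.2 fun _ _ => hzG (mem_range_self i₀))
    have hzero : ∀ j ∉ range e, extend e α 0 j = 0 := fun j hj => extend_apply' _ _ _ hj
    refine ⟨extend e z fun _ => z i₀, extend e α 0, fun j => hwG (mem_range_self j),
      extend_nonneg (fun i => (hα_pos i).le) le_rfl, ?_, ?_⟩
    · rw [← hα_sum]
      exact (Fintype.sum_of_injective e he _ _ hzero fun i => (he.extend_apply α 0 i).symm).symm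
    · refine Fintype.sum_of_injective e he _ _ (fun j hj => by rw [hzero j hj, zero_smul])
        fun i => ?_
      rw [he.extend_apply, he.extend_apply]
  · rintro ⟨w, α, hwG, hα_nonneg, hα_sum, rfl⟩
    exact (convex_convexHull 𝕜 G).sum_mem (fun i _ => hα_nonneg i) hα_sum
      fun i _ => subset_convexHull 𝕜 G (hwG i)

theorem isClosed_setOf_mem_convexHull_section {X V : Type*} [TopologicalSpace X]
    [AddCommGroup V] [Module ℝ V] [TopologicalSpace V] [IsTopologicalAddGroup V]
    [ContinuousSMul ℝ V] [T2Space V] [FiniteDimensional ℝ V]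
    {S : Set (X × V)} (hS : IsClosed S) {K : Set V} (hK : IsCompact K)
    (hSK : ∀ p ∈ S, p.2 ∈ K) :
    IsClosed {p : X × V | p.2 ∈ convexHull ℝ {y | (p.1, y) ∈ S}} := by
  set n := Module.finrank ℝ V
  have := isCompact_iff_compactSpace.mp hK
  let T : Set ((X × V) × (stdSimplex ℝ (Fin (n + 1)) × (Fin (n + 1) → K))) :=
    {q | (∀ i, (q.1.1, (q.2.2 i : V)) ∈ S) ∧
      q.1.2 = ∑ i, (q.2.1 : Fin (n + 1) → ℝ) i • (q.2.2 i : V)}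
  have hT : IsClosed T := by
    simp only [T, ofPred_and, ofPred_forall]
    refine (isClosed_iInter fun i => hS.preimage (by fun_prop)).inter
      (isClosed_eq (by fun_prop) (continuous_finsetSum _ fun i _ => ?_))
    exact ((continuous_apply i).comp (continuous_subtype_val.comp
      (continuous_fst.comp continuous_snd))).smul
      (continuous_subtype_val.comp ((continuous_apply i).comp (continuous_snd.comp continuous_snd)))
  convert isClosedMap_fst_of_compactSpace T hT using 1
  ext ⟨x, y⟩
  rw [mem_ofPred_eq, convexHull_eq_setOf_sum_fin_succ le_rfl]
  constructor
  · rintro ⟨w, α, hwS, hα_nonneg, hα_sum, rfl⟩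
    exact ⟨((x, _), ⟨α, hα_nonneg, hα_sum⟩, fun i => ⟨w i, hSK _ (hwS i)⟩), ⟨hwS, rfl⟩, rfl⟩
  · rintro ⟨⟨_, ⟨α, hα_nonneg, hα_sum⟩, w⟩, ⟨hwS, hy⟩, rfl⟩
    exact ⟨fun i => w i, α, hwS, hα_nonneg, hα_sum, hy⟩

/-- Carathéodory: in ℝ^N the convex hull of `G` is the set of convex combinations of
`N+1` points of `G`; consequently, if `Graph(C) ⊆ E × E` with `E` compact, the map
`x ↦ conv (closure (Graph C))_x` has closed graph. -/
theorem caratheodory_and_closed_graph (N : ℕ)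
    (E : Set (Fin N → ℝ)) (hE : IsCompact E)
    (C : (Fin N → ℝ) → Set (Fin N → ℝ))
    (hGraph : {p : (Fin N → ℝ) × (Fin N → ℝ) | p.2 ∈ C p.1} ⊆ E ×ˢ E)
    (D : (Fin N → ℝ) → Set (Fin N → ℝ))
    (hD : ∀ x, D x = convexHull ℝ
      {y | (x, y) ∈ closure {p : (Fin N → ℝ) × (Fin N → ℝ) | p.2 ∈ C p.1}}) :
    (∀ G : Set (Fin N → ℝ), convexHull ℝ G =
      {y | ∃ (w : Fin (N + 1) → (Fin N → ℝ)) (α : Fin (N + 1) → ℝ),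
        (∀ i, w i ∈ G) ∧ (∀ i, 0 ≤ α i) ∧ (∑ i, α i) = 1 ∧ y = ∑ i, α i • w i}) ∧
    (∀ (x y : ℕ → Fin N → ℝ) (x₀ y₀ : Fin N → ℝ),
      Filter.Tendsto x Filter.atTop (nhds x₀) →
      Filter.Tendsto y Filter.atTop (nhds y₀) →
      (∀ n, y n ∈ D (x n)) → y₀ ∈ D x₀) := by
  refine ⟨convexHull_eq_setOf_sum_fin_succ (Module.finrank_fin_fun ℝ).le,
    fun x y x₀ y₀ hx hy hxy => ?_⟩
  set S := closure {p : (Fin N → ℝ) × (Fin N → ℝ) | p.2 ∈ C p.1}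
  have hSE : ∀ p ∈ S, p.2 ∈ E := fun p hp =>
    (closure_minimal hGraph (hE.prod hE).isClosed hp).2
  have hgraph := isClosed_setOf_mem_convexHull_section isClosed_closure hE hSE
  simp only [hD] at hxy ⊢
  exact hgraph.mem_of_tendsto (hx.prodMk_nhds hy) (.of_forall hxy)
end

section
/- In the N-player Prisoner's Dilemma, if player 1 cooperates and k of her N-1 opponents cooperate, then μ¹(U(C,s^{-1})) = ((N-(k+1))/(N-1))·(v(C,k) - v(D,k+1)) ≤ 0; and if she defects and k opponents cooperate, then μ¹(U(D,s^{-1})) = (k/(N-1))·(v(D,k) - v(C,k-1)) ≥ 0. -/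
/-!
Every cooperator receives `v(C, c - 1)` and every defector `v(D, c)`, where `c` is the total
number of cooperators. Hence player 1's opponents consist of `k` players earning the same
cooperator payoff and `N - 1 - k` players earning the same defector payoff, and `μ¹` is the
gap between her payoff and this weighted average. If she cooperates (`c = k + 1`) the gap is
`v(C, k) - v(D, k + 1)`, weighted by the share of defecting opponents; if she defects (`c = k`)
it is `v(D, k) - v(C, k - 1)`, weighted by the share of cooperating opponents. The signs come
from `v(C, j) < v(D, j) ≤ v(D, j + 1)`.
-/

open Finset

section Cooperators

variable {ι : Type*} [Fintype ι] [DecidableEq ι] (s : ι → Bool)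

theorem filter_ne_and_eq_erase (i : ι) :
    univ.filter (fun j => j ≠ i ∧ s j = true) = (univ.filter fun j => s j = true).erase i := by
  ext j
  simp [and_comm]

theorem card_filter_ne_and_le (i : ι) :
    #(univ.filter fun j => j ≠ i ∧ s j = true) ≤ Fintype.card ι - 1 := by
  rw [filter_ne_and_eq_erase, ← card_univ, ← card_erase_of_mem (mem_univ i)]
  exact card_le_card (erase_subset_erase _ (filter_subset _ _))

theorem card_filter_eq_card_filter_ne_and_add_one {i : ι} (hi : s i = true) :
    #(univ.filter fun j => s j = true) = #(univ.filter fun j => j ≠ i ∧ s j = true) + 1 := by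
  rw [filter_ne_and_eq_erase, card_erase_add_one (by simp [hi])]

theorem card_filter_eq_card_filter_ne_and {i : ι} (hi : s i = false) :
    #(univ.filter fun j => s j = true) = #(univ.filter fun j => j ≠ i ∧ s j = true) := by
  rw [filter_ne_and_eq_erase, erase_eq_of_notMem (by simp [hi])]

variable {s} {vC vD : ℕ → ℝ} {U : ι → ℝ}

theorem payoff_eq_of_count
    (hU : ∀ i, U i = if s i then vC #(univ.filter fun j => j ≠ i ∧ s j = true)
                     else vD #(univ.filter fun j => j ≠ i ∧ s j = true)) (i : ι) :
    U i = if s i then vC (#(univ.filter fun j => s j = true) - 1)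
          else vD #(univ.filter fun j => s j = true) := by
  rw [hU i]
  cases hi : s i
  · simp [card_filter_eq_card_filter_ne_and s hi]
  · simp [card_filter_eq_card_filter_ne_and_add_one s hi]

theorem sum_payoff_opponents
    (hU : ∀ i, U i = if s i then vC #(univ.filter fun j => j ≠ i ∧ s j = true)
                     else vD #(univ.filter fun j => j ≠ i ∧ s j = true)) (i : ι) :
    ∑ j ∈ univ.filter (fun j => j ≠ i), U j =
      #(univ.filter fun j => j ≠ i ∧ s j = true) * vC (#(univ.filter fun j => s j = true) - 1) +
      ((Fintype.card ι : ℝ) - 1 - #(univ.filter fun j => j ≠ i ∧ s j = true)) *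
        vD #(univ.filter fun j => s j = true) := by
  have hsplit := card_filter_add_card_filter_not (s := univ.filter fun j => j ≠ i)
    (fun j => s j = true)
  have hopp : #(univ.filter fun j => j ≠ i) = Fintype.card ι - 1 := by
    rw [filter_ne', card_erase_of_mem (mem_univ i), card_univ]
  rw [filter_filter, hopp] at hsplit
  have hdef : (#((univ.filter fun j => j ≠ i).filter fun j => ¬s j = true) : ℝ) =
      (Fintype.card ι : ℝ) - 1 - #(univ.filter fun j => j ≠ i ∧ s j = true) := by
    have : 1 ≤ Fintype.card ι := Fintype.card_pos_iff.2 ⟨i⟩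
    rw [eq_sub_iff_add_eq, ← Nat.cast_add, add_comm, hsplit, Nat.cast_sub this, Nat.cast_one]
  simp_rw [payoff_eq_of_count hU]
  rw [sum_ite, sum_const, sum_const, filter_filter, nsmul_eq_mul, nsmul_eq_mul, hdef]

end Cooperators

theorem cooperate_le_defect_succ {N k : ℕ} {vC vD : ℕ → ℝ}
    (hdom : ∀ k ≤ N - 1, vC k < vD k) (hmono : ∀ k ≤ N - 2, vD k ≤ vD (k + 1))
    (hk : k + 1 ≤ N - 1) : vC k ≤ vD (k + 1) :=
  (hdom k (by omega)).le.trans (hmono k (by omega))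

/-- In the `N`-player Prisoner's Dilemma: if player 1 cooperates and `k` of her `N-1`
opponents cooperate, then `μ¹(U(C,s⁻¹)) = ((N-(k+1))/(N-1))(v(C,k) - v(D,k+1)) ≤ 0`;
if she defects with `k` cooperating opponents, `μ¹(U(D,s⁻¹)) = (k/(N-1))(v(D,k) - v(C,k-1)) ≥ 0`. -/
theorem mu_one_sign (N : ℕ) (hN : 2 ≤ N) (vC vD : ℕ → ℝ)
    (hdom : ∀ k ≤ N - 1, vC k < vD k)
    (hmono : ∀ k ≤ N - 2, vD k ≤ vD (k + 1))
    (s : Fin N → Bool)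
    (U : Fin N → ℝ)
    (hU : ∀ i, U i = if s i then vC ((univ.filter fun j => j ≠ i ∧ s j = true)).card
                     else vD ((univ.filter fun j => j ≠ i ∧ s j = true)).card)
    (k : ℕ)
    (hk : k = ((univ.filter fun j => j ≠ (⟨0, by omega⟩ : Fin N) ∧ s j = true)).card)
    (μ : ℝ)
    (hμ : μ = U ⟨0, by omega⟩ -
      (1 / ((N : ℝ) - 1)) * ∑ j ∈ univ.filter (fun j => j ≠ (⟨0, by omega⟩ : Fin N)), U j) :
    (s ⟨0, by omega⟩ = true →
      μ = (((N : ℝ) - (k + 1)) / ((N : ℝ) - 1)) * (vC k - vD (k + 1)) ∧ μ ≤ 0) ∧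
    (s ⟨0, by omega⟩ = false →
      μ = ((k : ℝ) / ((N : ℝ) - 1)) * (vD k - vC (k - 1)) ∧ 0 ≤ μ) := by
  set i₀ : Fin N := ⟨0, by omega⟩
  have hN₁ : (1 : ℝ) < N := by exact_mod_cast hN
  have hN₀ : (N : ℝ) - 1 ≠ 0 := by linarith
  have hkN : k ≤ N - 1 := by simpa [hk] using card_filter_ne_and_le s i₀
  have hkN' : (k : ℝ) ≤ N - 1 := by
    rw [← Nat.cast_one, ← Nat.cast_sub (by omega)]; exact_mod_cast hkN
  rw [sum_payoff_opponents hU, payoff_eq_of_count hU, Fintype.card_fin, ← hk] at hμ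
  refine ⟨fun hi₀ => ?_, fun hi₀ => ?_⟩
  · rw [card_filter_eq_card_filter_ne_and_add_one s hi₀, ← hk, if_pos hi₀,
      Nat.add_sub_cancel] at hμ
    have hμ_eq : μ = (((N : ℝ) - (k + 1)) / ((N : ℝ) - 1)) * (vC k - vD (k + 1)) := by
      rw [hμ]; field_simp; ring
    refine ⟨hμ_eq, hμ_eq ▸ ?_⟩
    rcases hkN.lt_or_eq with hlt | rfl
    · exact mul_nonpos_of_nonneg_of_nonpos (div_nonneg (by linarith) (by linarith))
        (sub_nonpos.2 (cooperate_le_defect_succ hdom hmono (by omega)))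
    · simp [Nat.cast_sub (by omega : 1 ≤ N)]
  · rw [card_filter_eq_card_filter_ne_and s hi₀, ← hk, if_neg (by simp [hi₀])] at hμ
    have hμ_eq : μ = ((k : ℝ) / ((N : ℝ) - 1)) * (vD k - vC (k - 1)) := by
      rw [hμ]; field_simp; ring
    refine ⟨hμ_eq, hμ_eq ▸ ?_⟩
    rcases k with _ | j
    · simp
    · exact mul_nonneg (div_nonneg (by positivity) (by linarith))
        (sub_nonneg.2 (cooperate_le_defect_succ hdom hmono (by omega)))
end

section
/- Let u ∈ ℝ^N and 1 ≤ k ≤ N-1. Suppose for each i ∈ {1,...,k} we have -(N-1)δ ≤ N·u_i - ∑_{j=1}^N u_j ≤ 0. Then for each i ∈ {1,...,k}: 0 ≤ (1/(N-k))·∑_{j=k+1}^N u_j - u_i ≤ δ·(N-1)/(N-k). -/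
open Finset

/-!
Write `n = |ι|`, `S = ∑ u` and `d j = n * u j - S`. For `i ∈ s`,
`n * (∑_{j ∉ s} u j - (n - |s|) * u i) = -(∑_{j ∈ s} d j + (n - |s|) * d i)`,
and the right-hand side is minus a sum of `n` terms (the `d j` for `j ∈ s` and `n - |s|`
copies of `d i`), each lying in `[-c, 0]`.
-/

section

variable {ι : Type*} [Fintype ι] [DecidableEq ι]

theorem card_mul_sum_compl_sub_eq (u : ι → ℝ) (s : Finset ι) (i : ι) :
    (Fintype.card ι : ℝ) * (∑ j ∈ sᶜ, u j - ((Fintype.card ι : ℝ) - #s) * u i) =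
      -(∑ j ∈ s, ((Fintype.card ι : ℝ) * u j - ∑ l, u l) +
        ((Fintype.card ι : ℝ) - #s) * ((Fintype.card ι : ℝ) * u i - ∑ l, u l)) := by
  rw [← sum_compl_add_sum s u, sum_sub_distrib, ← mul_sum, sum_const, nsmul_eq_mul]
  ring

theorem sum_compl_sub_card_compl_mul_mem_Icc {u : ι → ℝ} {s : Finset ι} {c : ℝ}
    (hdev : ∀ j ∈ s, (Fintype.card ι : ℝ) * u j - ∑ l, u l ∈ Set.Icc (-c) 0)
    {i : ι} (hi : i ∈ s) :
    ∑ j ∈ sᶜ, u j - ((Fintype.card ι : ℝ) - #s) * u i ∈ Set.Icc 0 c := by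
  set n : ℝ := (Fintype.card ι : ℝ)
  set d : ι → ℝ := fun j => n * u j - ∑ l, u l
  have hn : 0 < n := by
    have : Nonempty ι := ⟨i⟩
    exact Nat.cast_pos.2 Fintype.card_pos
  have hcompl : 0 ≤ n - #s := sub_nonneg.2 (Nat.cast_le.2 (card_le_univ s))
  have hsum_le : ∑ j ∈ s, d j ≤ 0 := sum_nonpos fun j hj => (hdev j hj).2
  have hsum_ge : #s * -c ≤ ∑ j ∈ s, d j := by
    simpa using card_nsmul_le_sum s d (-c) fun j hj => (hdev j hj).1
  have hi_le : (n - #s) * d i ≤ 0 := mul_nonpos_of_nonneg_of_nonpos hcompl (hdev i hi).2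
  have hi_ge : (n - #s) * -c ≤ (n - #s) * d i :=
    mul_le_mul_of_nonneg_left (hdev i hi).1 hcompl
  have hid := card_mul_sum_compl_sub_eq u s i
  constructor
  · exact nonneg_of_mul_nonneg_right (by linarith) hn
  · exact le_of_mul_le_mul_left (by linarith) hn

end

theorem group_average_bounds_general (N k : ℕ) (hk2 : k ≤ N - 1)
    (δ : ℝ) (u : Fin N → ℝ)
    (h : ∀ i : Fin N, (i : ℕ) < k →
      -(((N : ℝ) - 1) * δ) ≤ (N : ℝ) * u i - ∑ j, u j ∧ (N : ℝ) * u i - ∑ j, u j ≤ 0) :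
    ∀ i : Fin N, (i : ℕ) < k →
      0 ≤ (1 / ((N : ℝ) - k)) * (∑ j ∈ univ.filter (fun j : Fin N => k ≤ (j : ℕ)), u j) - u i ∧
      (1 / ((N : ℝ) - k)) * (∑ j ∈ univ.filter (fun j : Fin N => k ≤ (j : ℕ)), u j) - u i
        ≤ δ * ((N : ℝ) - 1) / ((N : ℝ) - k) := by
  intro i hi
  set s : Finset (Fin N) := univ.filter fun j => (j : ℕ) < k
  have hkN : k < N := by omega
  have hNk : 0 < (N : ℝ) - k := sub_pos.2 (by exact_mod_cast hkN)
  have hcard : #s = k := by simp [s, Fin.card_filter_val_lt, min_eq_right_of_lt hkN]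
  have hcompl : univ.filter (fun j : Fin N => k ≤ (j : ℕ)) = sᶜ := by ext; simp [s]
  obtain ⟨hlow, hupp⟩ := sum_compl_sub_card_compl_mul_mem_Icc (s := s) (c := ((N : ℝ) - 1) * δ)
    (fun j hj => by simpa using h j (mem_filter.1 hj).2) (mem_filter.2 ⟨mem_univ i, hi⟩)
  simp only [Fintype.card_fin, hcard] at hlow hupp
  have hfactor : (1 / ((N : ℝ) - k)) * (∑ j ∈ sᶜ, u j) - u i =
      (∑ j ∈ sᶜ, u j - ((N : ℝ) - k) * u i) / ((N : ℝ) - k) := by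
    field_simp [hNk.ne']
  rw [hcompl, hfactor, mul_comm δ]
  exact ⟨div_nonneg hlow hNk.le, div_le_div_of_nonneg_right hupp hNk.le⟩

/-- If `-(N-1)δ ≤ N u_i - ∑_j u_j ≤ 0` for all `i ∈ {1,…,k}`, then for each such `i`,
`0 ≤ (1/(N-k)) ∑_{j=k+1}^N u_j - u_i ≤ δ(N-1)/(N-k)`. -/
theorem group_average_bounds (N k : ℕ) (hN : 2 ≤ N) (hk1 : 1 ≤ k) (hk2 : k ≤ N - 1)
    (δ : ℝ) (hδ : 0 ≤ δ) (u : Fin N → ℝ)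
    (h : ∀ i : Fin N, (i : ℕ) < k →
      -(((N : ℝ) - 1) * δ) ≤ (N : ℝ) * u i - ∑ j, u j ∧ (N : ℝ) * u i - ∑ j, u j ≤ 0) :
    ∀ i : Fin N, (i : ℕ) < k →
      0 ≤ (1 / ((N : ℝ) - k)) * (∑ j ∈ univ.filter (fun j : Fin N => k ≤ (j : ℕ)), u j) - u i ∧
      (1 / ((N : ℝ) - k)) * (∑ j ∈ univ.filter (fun j : Fin N => k ≤ (j : ℕ)), u j) - u i
        ≤ δ * ((N : ℝ) - 1) / ((N : ℝ) - k) :=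
  group_average_bounds_general N k hk2 δ u h
end

section
/- In the network Prisoner's Dilemma, for any strategy profile s with s^i = C, μ^i(U(s)) ≤ 0; and for any s with s^i = D, μ^i(U(s)) ≥ 0. -/
/-- In the network Prisoner's Dilemma, for any pure profile `s`: if `s^i = C` then
`μ^i(U(s)) ≤ 0`, and if `s^i = D` then `μ^i(U(s)) ≥ 0`. -/
theorem network_mu_sign (M : ℕ) (CC CD DC DD : ℝ)
    (hpay : CD < DD ∧ DD < CC ∧ CC < DC)
    (ω : Fin M → Fin M → ℝ) (hωnonneg : ∀ i j, 0 ≤ ω i j)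
    (hloop : ∀ i, ω i i = 0)
    (hsym : ∀ i j, (0 < ω i j ↔ 0 < ω j i))
    (π : Fin M → ℝ) (hπ : ∀ i, (∑ j, ω i j = π i) ∧ (∑ j, ω j i = π i))
    (s : Fin M → Bool)
    (u : Fin M → Fin M → ℝ)
    (hu : ∀ i j, u i j = if s i then (if s j then CC else CD)
                         else (if s j then DC else DD))
    (μ : Fin M → ℝ)
    (hμ : ∀ i, μ i = ∑ j, (ω i j * u i j - ω j i * u j i)) :
    ∀ i, (s i = true → μ i ≤ 0) ∧ (s i = false → 0 ≤ μ i) := by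
  obtain ⟨h1, h2, h3⟩ := hpay
  intro i
  have hsum : ∀ c : ℝ, ∑ j, (ω i j * c - ω j i * c) = 0 := by
    intro c
    rw [Finset.sum_sub_distrib, ← Finset.sum_mul, ← Finset.sum_mul,
      (hπ i).1, (hπ i).2, sub_self]
  constructor
  · intro hsi
    rw [hμ]
    calc ∑ j, (ω i j * u i j - ω j i * u j i)
        ≤ ∑ j, (ω i j * CC - ω j i * CC) := by
          apply Finset.sum_le_sum
          intro j _
          rw [hu i j, hu j i, hsi]
          cases hj : s j <;> simp [hj] <;>
            nlinarith [hωnonneg i j, hωnonneg j i]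
      _ = 0 := hsum CC
  · intro hsi
    rw [hμ]
    calc (0 : ℝ) = ∑ j, (ω i j * DD - ω j i * DD) := (hsum DD).symm
      _ ≤ ∑ j, (ω i j * u i j - ω j i * u j i) := by
          apply Finset.sum_le_sum
          intro j _
          rw [hu i j, hu j i, hsi]
          cases hj : s j <;> simp [hj] <;>
            nlinarith [hωnonneg i j, hωnonneg j i]
end

section
/- In the network Prisoner's Dilemma with Pareto conditions, if u ∈ E = conv{U(s) : s ∈ Σ} satisfies -δ ≤ μ^i(u) ≤ 0, then the mean payoff ū_i = ∑_j K_{ij} u_{ij} satisfies DD - δ/(2π_i) ≤ ū_i ≤ CC. -/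
/-!
The quantity `∑ⱼ (ω_{ij} u_{ij} + ω_{ji} u_{ji})` is linear in `u`. On each edge, a pure profile
yields a value between `(ω_{ij} + ω_{ji}) DD` and `(ω_{ij} + ω_{ji}) CC`: for the mixed outcomes
this is the Pareto condition, which also forces `ω_{ji} = 0` whenever `ω_{ij} = 0` (because
`CD < DD`). Summing over `j` with `∑ⱼ ω_{ij} = ∑ⱼ ω_{ji} = π_i` bounds the linear functional by
`[2π_i DD, 2π_i CC]` on pure profiles, hence on their convex hull. Since it equals `π_i ū_i + T`
while `μ^i(u) = π_i ū_i - T`, where `T = ∑ⱼ ω_{ji} u_{ji}`, the two-sided bound on `μ^i(u)` gives the bounds on `ū_i`.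
-/

open Finset Set

section StageGame

variable {CC CD DC DD : ℝ}

def stagePayoff (CC CD DC DD : ℝ) (x y : Bool) : ℝ :=
  if x then (if y then CC else CD) else (if y then DC else DD)

def IsParetoEdge (CC CD DC DD a b : ℝ) : Prop :=
  (a + b) * DD < a * CD + b * DC ∧ a * CD + b * DC < (a + b) * CC

lemma mixed_edge_payoff_bounds (hCD : CD < DD) {a b : ℝ} (ha : 0 ≤ a) (hb : 0 ≤ b)
    (hab : 0 < a → IsParetoEdge CC CD DC DD a b) (hba : 0 < b → IsParetoEdge CC CD DC DD b a) :
    (a + b) * DD ≤ a * CD + b * DC ∧ a * CD + b * DC ≤ (a + b) * CC := by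
  rcases ha.eq_or_lt with rfl | ha
  · obtain rfl : b = 0 := by
      by_contra hb0
      have := (hba (hb.lt_of_ne' hb0)).1
      simp only [zero_mul, add_zero] at this
      nlinarith
    simp
  · exact ⟨(hab ha).1.le, (hab ha).2.le⟩

lemma edge_stagePayoff_bounds (hCD : CD < DD) (hDDCC : DD < CC) {a b : ℝ} (ha : 0 ≤ a)
    (hb : 0 ≤ b) (hab : 0 < a → IsParetoEdge CC CD DC DD a b)
    (hba : 0 < b → IsParetoEdge CC CD DC DD b a) (x y : Bool) :
    (a + b) * DD ≤ a * stagePayoff CC CD DC DD x y + b * stagePayoff CC CD DC DD y x ∧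
      a * stagePayoff CC CD DC DD x y + b * stagePayoff CC CD DC DD y x ≤ (a + b) * CC := by
  have hsym := mixed_edge_payoff_bounds hCD hb ha hba hab
  rw [add_comm b a] at hsym
  have hpure : (a + b) * DD ≤ (a + b) * CC := mul_le_mul_of_nonneg_left hDDCC.le (add_nonneg ha hb)
  cases x <;> cases y <;> simp only [stagePayoff, Bool.false_eq_true, if_true, if_false]
  · constructor <;> linarith
  · constructor <;> linarith [hsym.1, hsym.2]
  · exact mixed_edge_payoff_bounds hCD ha hb hab hba
  · constructor <;> linarith

end StageGame

section Network

variable {ι : Type*} [Fintype ι]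

def twoWayPayoff (ω : ι → ι → ℝ) (i : ι) : (ι → ι → ℝ) →ₗ[ℝ] ℝ where
  toFun x := ∑ j, (ω i j * x i j + ω j i * x j i)
  map_add' x y := by
    simp only [Pi.add_apply, mul_add, ← sum_add_distrib]
    exact sum_congr rfl fun j _ ↦ by ring
  map_smul' c x := by
    simp only [Pi.smul_apply, smul_eq_mul, RingHom.id_apply, mul_sum]
    exact sum_congr rfl fun j _ ↦ by ring

lemma twoWayPayoff_apply (ω : ι → ι → ℝ) (i : ι) (x : ι → ι → ℝ) :
    twoWayPayoff ω i x = ∑ j, ω i j * x i j + ∑ j, ω j i * x j i :=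
  sum_add_distrib

variable {CC CD DC DD : ℝ}

lemma twoWayPayoff_stagePayoff_mem_Icc (hCD : CD < DD) (hDDCC : DD < CC) {ω : ι → ι → ℝ}
    (hω : ∀ j k, 0 ≤ ω j k)
    (hPareto : ∀ j k, 0 < ω j k → IsParetoEdge CC CD DC DD (ω j k) (ω k j))
    {i : ι} {p : ℝ} (hrow : ∑ j, ω i j = p) (hcol : ∑ j, ω j i = p) (s : ι → Bool) :
    twoWayPayoff ω i (fun j k ↦ stagePayoff CC CD DC DD (s j) (s k)) ∈
      Icc (2 * p * DD) (2 * p * CC) := by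
  have hweights (c : ℝ) : ∑ j, (ω i j + ω j i) * c = 2 * p * c := by
    rw [← sum_mul, sum_add_distrib, hrow, hcol]
    ring
  have hedge (j : ι) := edge_stagePayoff_bounds hCD hDDCC (hω i j) (hω j i) (hPareto i j)
    (hPareto j i) (s i) (s j)
  rw [← hweights, ← hweights]
  exact ⟨sum_le_sum fun j _ ↦ (hedge j).1, sum_le_sum fun j _ ↦ (hedge j).2⟩

end Network

theorem network_mean_payoff_bounds_general (M : ℕ) (CC CD DC DD : ℝ)
    (hpay : CD < DD ∧ DD < CC ∧ CC < DC)
    (K : Fin M → Fin M → ℝ) (hKnonneg : ∀ i j, 0 ≤ K i j)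
    (π : Fin M → ℝ) (hπpos : ∀ i, 0 < π i)
    (ω : Fin M → Fin M → ℝ) (hω : ∀ i j, ω i j = π i * K i j)
    (hsums : ∀ i, (∑ j, ω i j = π i) ∧ (∑ j, ω j i = π i))
    (hPareto : ∀ i j, 0 < ω i j →
      (ω i j + ω j i) * DD < ω i j * CD + ω j i * DC ∧
      ω i j * CD + ω j i * DC < (ω i j + ω j i) * CC)
    (U : (Fin M → Bool) → Fin M → Fin M → ℝ)
    (hU : ∀ s i j, U s i j = if s i then (if s j then CC else CD)
                             else (if s j then DC else DD))
    (δ : ℝ)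
    (u : Fin M → Fin M → ℝ) (hu : u ∈ convexHull ℝ {x | ∃ s, x = U s})
    (i : Fin M)
    (hμ : -δ ≤ ∑ j, (ω i j * u i j - ω j i * u j i) ∧
          ∑ j, (ω i j * u i j - ω j i * u j i) ≤ 0) :
    DD - δ / (2 * π i) ≤ ∑ j, K i j * u i j ∧ ∑ j, K i j * u i j ≤ CC := by
  obtain ⟨hCD, hDDCC, -⟩ := hpay
  have hωnn (j k : Fin M) : 0 ≤ ω j k := hω j k ▸ mul_nonneg (hπpos j).le (hKnonneg j k)
  have hpure : {x | ∃ s, x = U s} ⊆ twoWayPayoff ω i ⁻¹' Icc (2 * π i * DD) (2 * π i * CC) := by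
    rintro _ ⟨s, rfl⟩
    rw [show U s = fun j k ↦ stagePayoff CC CD DC DD (s j) (s k) from funext₂ (hU s)]
    exact twoWayPayoff_stagePayoff_mem_Icc hCD hDDCC hωnn hPareto (hsums i).1 (hsums i).2 s
  obtain ⟨hlo, hhi⟩ := convexHull_min hpure ((convex_Icc _ _).linear_preimage _) hu
  have hout : ∑ j, ω i j * u i j = π i * ∑ j, K i j * u i j := by
    simp_rw [hω, mul_assoc, ← mul_sum]
  rw [twoWayPayoff_apply, hout] at hlo hhi
  rw [sum_sub_distrib, hout] at hμ
  have hπ := hπpos i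
  constructor
  · rw [sub_le_comm, le_div_iff₀ (by positivity)]
    linarith [hμ.1]
  · exact le_of_mul_le_mul_left (by linarith [hμ.2]) hπ

/-- In the network PD with Pareto conditions: if `u ∈ E = conv{U(s)}` and
`-δ ≤ μ^i(u) ≤ 0`, then `DD - δ/(2π_i) ≤ ∑_j K_{ij} u_{ij} ≤ CC`. -/
theorem network_mean_payoff_bounds (M : ℕ) (CC CD DC DD : ℝ)
    (hpay : CD < DD ∧ DD < CC ∧ CC < DC)
    (K : Fin M → Fin M → ℝ) (hKnonneg : ∀ i j, 0 ≤ K i j) (hKrow : ∀ i, ∑ j, K i j = 1)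
    (π : Fin M → ℝ) (hπpos : ∀ i, 0 < π i)
    (ω : Fin M → Fin M → ℝ) (hω : ∀ i j, ω i j = π i * K i j)
    (hsums : ∀ i, (∑ j, ω i j = π i) ∧ (∑ j, ω j i = π i))
    (hPareto : ∀ i j, 0 < ω i j →
      (ω i j + ω j i) * DD < ω i j * CD + ω j i * DC ∧
      ω i j * CD + ω j i * DC < (ω i j + ω j i) * CC)
    (U : (Fin M → Bool) → Fin M → Fin M → ℝ)
    (hU : ∀ s i j, U s i j = if s i then (if s j then CC else CD)
                             else (if s j then DC else DD))
    (δ : ℝ) (hδ : 0 ≤ δ)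
    (u : Fin M → Fin M → ℝ) (hu : u ∈ convexHull ℝ {x | ∃ s, x = U s})
    (i : Fin M)
    (hμ : -δ ≤ ∑ j, (ω i j * u i j - ω j i * u j i) ∧
          ∑ j, (ω i j * u i j - ω j i * u j i) ≤ 0) :
    DD - δ / (2 * π i) ≤ ∑ j, K i j * u i j ∧ ∑ j, K i j * u i j ≤ CC :=
  network_mean_payoff_bounds_general M CC CD DC DD hpay K hKnonneg π hπpos ω hω hsums hPareto U hU δ
    u hu i hμ
end

section
/- In the network PD, if u ∈ ∩_{j=1}^k Λ^j(δ) (i.e., -δ ≤ μ^j(u) ≤ 0 for j = 1,...,k, k < N), then 0 ≤ ∑_{i=k+1}^N μ^i(u) ≤ kδ, and (∑_{i=k+1}^N π_i)·DD ≤ ∑_{i=k+1}^N π_i·ū_i ≤ (∑_{i=k+1}^N π_i)·CC + kδ/2, where ū_i = ∑_j K_{ij}u_{ij}. -/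
/-!
Write `ū_i = ∑_j K_ij u_ij`. Since `π_i K_ij = ω_ij`, twice the group payoff `∑_{i∈S} π_i ū_i`
splits as the net flux `∑_{i∈S} μ^i(u)` plus the welfare `∑_{i∈S} ∑_j (ω_ij u_ij + ω_ji u_ji)`
of all pairs touching `S`. The flux is controlled by the players outside `S`, because the
fluxes of all players sum to zero. The welfare is linear in `u`, so it suffices to bound it at
pure profiles, where the Pareto bounds give `(ω_ij + ω_ji)·DD ≤ ω_ij U^ij + ω_ji U^ji ≤
(ω_ij + ω_ji)·CC` pair by pair; the pair weights add up to `2 ∑_{i∈S} π_i`.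
-/

open Finset

/-- `true` stands for cooperation. -/
def pdPayoff (CC CD DC DD : ℝ) (x y : Bool) : ℝ :=
  if x then (if y then CC else CD) else (if y then DC else DD)

/-- A pair cannot carry positive weight on one side only: the Pareto bound of that side would
force `DD < CD`. -/
theorem pdPayoff_pair_bounds {CC CD DC DD a b : ℝ} (hCD : CD < DD) (ha : 0 ≤ a) (hb : 0 ≤ b)
    (hab : 0 < a → (a + b) * DD < a * CD + b * DC ∧ a * CD + b * DC < (a + b) * CC)
    (hba : 0 < b → (b + a) * DD < b * CD + a * DC ∧ b * CD + a * DC < (b + a) * CC)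
    (x y : Bool) :
    (a + b) * DD ≤ a * pdPayoff CC CD DC DD x y + b * pdPayoff CC CD DC DD y x ∧
      a * pdPayoff CC CD DC DD x y + b * pdPayoff CC CD DC DD y x ≤ (a + b) * CC := by
  rcases ha.eq_or_lt with rfl | ha
  · rcases hb.eq_or_lt with rfl | hb
    · simp
    · nlinarith [(hba hb).1]
  rcases hb.eq_or_lt with rfl | hb
  · nlinarith [(hab ha).1]
  obtain ⟨hab₁, hab₂⟩ := hab ha
  obtain ⟨hba₁, hba₂⟩ := hba hb
  have hDDCC : (a + b) * DD ≤ (a + b) * CC := by linarith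
  cases x <;> cases y <;> simp only [pdPayoff, Bool.false_eq_true, if_true, if_false] <;>
    constructor <;> linarith

theorem apply_mem_Icc_of_mem_convexHull {E : Type*} [AddCommGroup E] [Module ℝ E]
    (f : E →ₗ[ℝ] ℝ) {A : Set E} {a b : ℝ} (hA : ∀ x ∈ A, f x ∈ Set.Icc a b) {x : E}
    (hx : x ∈ convexHull ℝ A) : f x ∈ Set.Icc a b :=
  convexHull_min hA ((convex_Icc a b).linear_preimage f) hx

section Network

variable {ι : Type*} [Fintype ι]

theorem sum_flux_eq_zero (ω u : ι → ι → ℝ) :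
    ∑ i, ∑ j, (ω i j * u i j - ω j i * u j i) = 0 := by
  simp only [sum_sub_distrib]
  rw [sum_comm, sub_self]

theorem sum_filter_not_flux_bounds {μ : ι → ℝ} (hμ : ∑ i, μ i = 0) (p : ι → Prop)
    [DecidablePred p] {δ : ℝ} (hp : ∀ i, p i → -δ ≤ μ i ∧ μ i ≤ 0) :
    0 ≤ ∑ i ∈ univ.filter (fun i => ¬p i), μ i ∧
      ∑ i ∈ univ.filter (fun i => ¬p i), μ i ≤ #(univ.filter p) * δ := by
  have hsplit := sum_filter_add_sum_filter_not univ p μ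
  have hupper : ∑ i ∈ univ.filter p, μ i ≤ 0 :=
    sum_nonpos fun i hi => (hp i (mem_filter.1 hi).2).2
  have hlower : ∑ i ∈ univ.filter p, (-δ) ≤ ∑ i ∈ univ.filter p, μ i :=
    sum_le_sum fun i hi => (hp i (mem_filter.1 hi).2).1
  rw [sum_const, nsmul_eq_mul] at hlower
  constructor <;> linarith

def groupPairWelfare (ω : ι → ι → ℝ) (S : Finset ι) : (ι → ι → ℝ) →ₗ[ℝ] ℝ where
  toFun x := ∑ i ∈ S, ∑ j, (ω i j * x i j + ω j i * x j i)
  map_add' x y := by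
    simp only [Pi.add_apply, ← sum_add_distrib]
    exact sum_congr rfl fun i _ => sum_congr rfl fun j _ => by ring
  map_smul' c x := by
    simp only [Pi.smul_apply, smul_eq_mul, RingHom.id_apply, mul_sum]
    exact sum_congr rfl fun i _ => sum_congr rfl fun j _ => by ring

theorem groupPairWelfare_mem_Icc {ω x : ι → ι → ℝ} {lo hi : ℝ} (S : Finset ι)
    (hpair : ∀ i j, (ω i j + ω j i) * lo ≤ ω i j * x i j + ω j i * x j i ∧
      ω i j * x i j + ω j i * x j i ≤ (ω i j + ω j i) * hi) :
    groupPairWelfare ω S x ∈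
      Set.Icc ((∑ i ∈ S, ∑ j, (ω i j + ω j i)) * lo) ((∑ i ∈ S, ∑ j, (ω i j + ω j i)) * hi) := by
  simp only [sum_mul]
  exact ⟨sum_le_sum fun i _ => sum_le_sum fun j _ => (hpair i j).1,
    sum_le_sum fun i _ => sum_le_sum fun j _ => (hpair i j).2⟩

theorem sum_pair_weights_eq {ω : ι → ι → ℝ} {π : ι → ℝ} (hrow : ∀ i, ∑ j, ω i j = π i)
    (hcol : ∀ i, ∑ j, ω j i = π i) (S : Finset ι) :
    ∑ i ∈ S, ∑ j, (ω i j + ω j i) = 2 * ∑ i ∈ S, π i := by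
  rw [mul_sum]
  exact sum_congr rfl fun i _ => by rw [sum_add_distrib, hrow, hcol, two_mul]

theorem two_mul_sum_groupPayoff {ω K u : ι → ι → ℝ} {π : ι → ℝ}
    (hω : ∀ i j, ω i j = π i * K i j) (S : Finset ι) :
    2 * ∑ i ∈ S, π i * ∑ j, K i j * u i j =
      ∑ i ∈ S, ∑ j, (ω i j * u i j - ω j i * u j i) + groupPairWelfare ω S u := by
  simp only [groupPairWelfare, LinearMap.coe_mk, AddHom.coe_mk, ← sum_add_distrib, mul_sum]
  exact sum_congr rfl fun i _ => sum_congr rfl fun j _ => by rw [hω]; ring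

end Network

theorem network_group_bounds_general (N : ℕ) (CC CD DC DD : ℝ)
    (hpay : CD < DD ∧ DD < CC ∧ CC < DC)
    (K : Fin N → Fin N → ℝ) (hKnonneg : ∀ i j, 0 ≤ K i j)
    (π : Fin N → ℝ) (hπpos : ∀ i, 0 < π i)
    (ω : Fin N → Fin N → ℝ) (hω : ∀ i j, ω i j = π i * K i j)
    (hsums : ∀ i, (∑ j, ω i j = π i) ∧ (∑ j, ω j i = π i))
    (hPareto : ∀ i j, 0 < ω i j →
      (ω i j + ω j i) * DD < ω i j * CD + ω j i * DC ∧
      ω i j * CD + ω j i * DC < (ω i j + ω j i) * CC)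
    (U : (Fin N → Bool) → Fin N → Fin N → ℝ)
    (hU : ∀ s i j, U s i j = if s i then (if s j then CC else CD)
                             else (if s j then DC else DD))
    (δ : ℝ)
    (μ : Fin N → (Fin N → Fin N → ℝ) → ℝ)
    (hμ : ∀ i u, μ i u = ∑ j, (ω i j * u i j - ω j i * u j i))
    (k : ℕ) (hk : k < N)
    (u : Fin N → Fin N → ℝ) (hu : u ∈ convexHull ℝ {x | ∃ s, x = U s})
    (hΛ : ∀ j : Fin N, (j : ℕ) < k → -δ ≤ μ j u ∧ μ j u ≤ 0) :
    (0 ≤ ∑ i ∈ univ.filter (fun i : Fin N => k ≤ (i : ℕ)), μ i u ∧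
      ∑ i ∈ univ.filter (fun i : Fin N => k ≤ (i : ℕ)), μ i u ≤ k * δ) ∧
    ((∑ i ∈ univ.filter (fun i : Fin N => k ≤ (i : ℕ)), π i) * DD ≤
        ∑ i ∈ univ.filter (fun i : Fin N => k ≤ (i : ℕ)), π i * (∑ j, K i j * u i j) ∧
      ∑ i ∈ univ.filter (fun i : Fin N => k ≤ (i : ℕ)), π i * (∑ j, K i j * u i j) ≤
        (∑ i ∈ univ.filter (fun i : Fin N => k ≤ (i : ℕ)), π i) * CC + k * δ / 2) := by
  set S := univ.filter (fun i : Fin N => k ≤ (i : ℕ))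
  have hωnonneg i j : 0 ≤ ω i j := hω i j ▸ mul_nonneg (hπpos i).le (hKnonneg i j)
  have hflux : 0 ≤ ∑ i ∈ S, μ i u ∧ ∑ i ∈ S, μ i u ≤ k * δ := by
    have h := sum_filter_not_flux_bounds (by simpa only [hμ] using sum_flux_eq_zero ω u)
      (fun i : Fin N => (i : ℕ) < k) hΛ
    simp only [not_lt] at h
    rwa [Fin.card_filter_val_lt, min_eq_right hk.le] at h
  have hwelfare : groupPairWelfare ω S u ∈
      Set.Icc (2 * (∑ i ∈ S, π i) * DD) (2 * (∑ i ∈ S, π i) * CC) := by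
    rw [← sum_pair_weights_eq (fun i => (hsums i).1) (fun i => (hsums i).2) S]
    refine apply_mem_Icc_of_mem_convexHull _ ?_ hu
    rintro _ ⟨s, rfl⟩
    refine groupPairWelfare_mem_Icc S fun i j => ?_
    simp only [hU]
    exact pdPayoff_pair_bounds hpay.1 (hωnonneg i j) (hωnonneg j i)
      (hPareto i j) (hPareto j i) (s i) (s j)
  have hsplit := two_mul_sum_groupPayoff (u := u) hω S
  simp only [← hμ] at hsplit
  exact ⟨hflux, by linarith [hwelfare.1], by linarith [hwelfare.2]⟩

/-- In the network PD: if `-δ ≤ μ^j(u) ≤ 0` for `j = 1,…,k` (`k < N`), then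
`0 ≤ ∑_{i>k} μ^i(u) ≤ kδ` and
`(∑_{i>k} π_i)·DD ≤ ∑_{i>k} π_i·ū_i ≤ (∑_{i>k} π_i)·CC + kδ/2`. -/
theorem network_group_bounds (N : ℕ) (CC CD DC DD : ℝ)
    (hpay : CD < DD ∧ DD < CC ∧ CC < DC)
    (K : Fin N → Fin N → ℝ) (hKnonneg : ∀ i j, 0 ≤ K i j) (hKrow : ∀ i, ∑ j, K i j = 1)
    (π : Fin N → ℝ) (hπpos : ∀ i, 0 < π i)
    (ω : Fin N → Fin N → ℝ) (hω : ∀ i j, ω i j = π i * K i j)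
    (hsums : ∀ i, (∑ j, ω i j = π i) ∧ (∑ j, ω j i = π i))
    (hPareto : ∀ i j, 0 < ω i j →
      (ω i j + ω j i) * DD < ω i j * CD + ω j i * DC ∧
      ω i j * CD + ω j i * DC < (ω i j + ω j i) * CC)
    (U : (Fin N → Bool) → Fin N → Fin N → ℝ)
    (hU : ∀ s i j, U s i j = if s i then (if s j then CC else CD)
                             else (if s j then DC else DD))
    (δ : ℝ) (hδ : 0 ≤ δ)
    (μ : Fin N → (Fin N → Fin N → ℝ) → ℝ)
    (hμ : ∀ i u, μ i u = ∑ j, (ω i j * u i j - ω j i * u j i))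
    (k : ℕ) (hk : k < N)
    (u : Fin N → Fin N → ℝ) (hu : u ∈ convexHull ℝ {x | ∃ s, x = U s})
    (hΛ : ∀ j : Fin N, (j : ℕ) < k → -δ ≤ μ j u ∧ μ j u ≤ 0) :
    (0 ≤ ∑ i ∈ univ.filter (fun i : Fin N => k ≤ (i : ℕ)), μ i u ∧
      ∑ i ∈ univ.filter (fun i : Fin N => k ≤ (i : ℕ)), μ i u ≤ k * δ) ∧
    ((∑ i ∈ univ.filter (fun i : Fin N => k ≤ (i : ℕ)), π i) * DD ≤
        ∑ i ∈ univ.filter (fun i : Fin N => k ≤ (i : ℕ)), π i * (∑ j, K i j * u i j) ∧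
      ∑ i ∈ univ.filter (fun i : Fin N => k ≤ (i : ℕ)), π i * (∑ j, K i j * u i j) ≤
        (∑ i ∈ univ.filter (fun i : Fin N => k ≤ (i : ℕ)), π i) * CC + k * δ / 2) :=
  network_group_bounds_general N CC CD DC DD hpay K hKnonneg π hπpos ω hω hsums hPareto U hU δ μ hμ
    k hk u hu hΛ
end

section
/- Suppose there exist actions a₁, a₂ ∈ A and reals α ≤ β (or β ≤ α) with μ(U(a₁,b)) ≤ α and μ(U(a₂,b)) ≥ β for all b ∈ B, and suppose the payoff-based strategy Q satisfies Q_u(a₁) = 1 whenever μ(u) > α and Q_u(a₂) = 1 whenever μ(u) < β. Then for every u ∈ E with μ(u) > α, every v ∈ C(u) satisfies μ(v) ≤ α; and for every u with μ(u) < β, every v ∈ C(u) satisfies μ(v) ≥ β. Hence Λ = {u ∈ E : μ(u) ∈ [min(α,β), max(α,β)]} satisfies the Blackwell separation condition (is a B-set). -/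
/-!
Playing `a₁` against any mixed action of the opponent yields a convex combination of the points
`U(a₁, b)`, all in the half-space `μ ≤ α`; symmetrically for `a₂`. For the separation condition
take `x ∈ E` above the slab `Λ`, let `y` be its nearest point in the closed convex set `Λ`, and
`v ∈ C(x) ⊆ E` lie below the top of `Λ`. The segment from `x` to `v` crosses the top of the slab at
a point `z = t v + (1 - t) x ∈ Λ` with `t > 0`, and `⟪x - y, z - y⟫ ≤ 0` then forces
`⟪x - y, v - y⟫ ≤ 0`. Points below the slab are handled by replacing `μ` with `-μ`.
-/

open RealInnerProductSpace

section MixedPayoff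

variable {A B M : Type*} [Fintype A] [Fintype B] [AddCommGroup M] [Module ℝ M]

lemma eq_zero_of_sum_eq_one_of_apply_eq_one {Q : A → ℝ} (hQ0 : ∀ a, 0 ≤ Q a)
    (hQs : ∑ a, Q a = 1) {a₀ : A} (h : Q a₀ = 1) {a : A} (ha : a ≠ a₀) : Q a = 0 := by
  classical
  have hle := Finset.single_le_sum (fun i _ => hQ0 i)
    (Finset.mem_erase.2 ⟨ha, Finset.mem_univ a⟩)
  have hsplit := Finset.add_sum_erase Finset.univ Q (Finset.mem_univ a₀)
  linarith [hQ0 a]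

lemma sum_sum_mul_smul_eq_sum_smul_of_apply_eq_one {Q : A → ℝ} (hQ0 : ∀ a, 0 ≤ Q a)
    (hQs : ∑ a, Q a = 1) {a₀ : A} (h : Q a₀ = 1) (ν : B → ℝ) (U : A → B → M) :
    ∑ a, ∑ b, (Q a * ν b) • U a b = ∑ b, ν b • U a₀ b := by
  rw [Fintype.sum_eq_single a₀ fun a ha => by
    simp [eq_zero_of_sum_eq_one_of_apply_eq_one hQ0 hQs h ha]]
  simp [h]

lemma sum_sum_mul_smul_mem_of_apply_eq_one {S : Set M} (hS : Convex ℝ S) {Q : A → ℝ}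
    (hQ0 : ∀ a, 0 ≤ Q a) (hQs : ∑ a, Q a = 1) {a₀ : A} (h : Q a₀ = 1) {ν : B → ℝ}
    (hν0 : ∀ b, 0 ≤ ν b) (hνs : ∑ b, ν b = 1) {U : A → B → M} (hU : ∀ b, U a₀ b ∈ S) :
    ∑ a, ∑ b, (Q a * ν b) • U a b ∈ S := by
  rw [sum_sum_mul_smul_eq_sum_smul_of_apply_eq_one hQ0 hQs h]
  exact hS.sum_mem (fun b _ => hν0 b) hνs fun b _ => hU b

lemma sum_sum_mul_smul_mem {S : Set M} (hS : Convex ℝ S) {Q : A → ℝ} (hQ0 : ∀ a, 0 ≤ Q a)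
    (hQs : ∑ a, Q a = 1) {ν : B → ℝ} (hν0 : ∀ b, 0 ≤ ν b) (hνs : ∑ b, ν b = 1)
    {U : A → B → M} (hU : ∀ a b, U a b ∈ S) :
    ∑ a, ∑ b, (Q a * ν b) • U a b ∈ S := by
  simp_rw [mul_smul, ← Finset.smul_sum]
  exact hS.sum_mem (fun a _ => hQ0 a) hQs fun a _ =>
    hS.sum_mem (fun b _ => hν0 b) hνs fun b _ => hU a b

end MixedPayoff

section Slab

variable {V : Type*} [NormedAddCommGroup V] [InnerProductSpace ℝ V]

lemma isClosed_convexHull_setOf_eq {A B : Type*} [Finite A] [Finite B] (U : A → B → V) :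
    IsClosed (convexHull ℝ {x | ∃ a b, x = U a b}) := by
  have hfin : {x : V | ∃ a b, x = U a b}.Finite := (Set.finite_range (Function.uncurry U)).subset
    (by rintro _ ⟨a, b, rfl⟩; exact ⟨(a, b), rfl⟩)
  exact (hfin.isCompact_convexHull (𝕜 := ℝ)).isClosed

lemma isLinearMap_real_inner (μ : V) : IsLinearMap ℝ fun u : V => ⟪μ, u⟫ :=
  ⟨inner_add_right μ, fun c u => real_inner_smul_right μ u c⟩

lemma convex_slab {E : Set V} (hE : Convex ℝ E) (μ : V) (lo hi : ℝ) :
    Convex ℝ {u ∈ E | lo ≤ ⟪μ, u⟫ ∧ ⟪μ, u⟫ ≤ hi} :=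
  hE.inter ((convex_halfSpace_ge (isLinearMap_real_inner μ) lo).inter
    (convex_halfSpace_le (isLinearMap_real_inner μ) hi))

lemma isClosed_slab {E : Set V} (hE : IsClosed E) (μ : V) (lo hi : ℝ) :
    IsClosed {u ∈ E | lo ≤ ⟪μ, u⟫ ∧ ⟪μ, u⟫ ≤ hi} :=
  show IsClosed (E ∩ ({u | lo ≤ ⟪μ, u⟫} ∩ {u | ⟪μ, u⟫ ≤ hi})) from
    hE.inter ((isClosed_le continuous_const (continuous_const.inner continuous_id)).inter
      (isClosed_le (continuous_const.inner continuous_id) continuous_const))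

lemma slab_neg (E : Set V) (μ : V) (lo hi : ℝ) :
    {u ∈ E | -hi ≤ ⟪-μ, u⟫ ∧ ⟪-μ, u⟫ ≤ -lo} = {u ∈ E | lo ≤ ⟪μ, u⟫ ∧ ⟪μ, u⟫ ≤ hi} := by
  ext u
  simp only [Set.mem_sep_iff, inner_neg_left, neg_le_neg_iff]
  exact and_congr_right' and_comm

lemma exists_nearest_real_inner_sub_nonpos {K : Set V} (hne : K.Nonempty) (hc : IsComplete K)
    (hK : Convex ℝ K) (x : V) :
    ∃ y ∈ K, (∀ z ∈ K, dist x y ≤ dist x z) ∧ ∀ w ∈ K, ⟪x - y, w - y⟫ ≤ 0 := by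
  obtain ⟨y, hyK, hy⟩ := exists_norm_eq_iInf_of_complete_convex hne hc hK x
  refine ⟨y, hyK, fun z hz => ?_, (norm_eq_iInf_iff_real_inner_le_zero hK hyK).1 hy⟩
  rw [dist_eq_norm, dist_eq_norm, hy]
  exact ciInf_le ⟨0, by rintro _ ⟨w, rfl⟩; exact norm_nonneg _⟩ (⟨z, hz⟩ : K)

lemma exists_smul_add_smul_mem_slab {E : Set V} (hE : Convex ℝ E) {μ : V} {lo hi : ℝ}
    (hlohi : lo ≤ hi) {x v : V} (hx : x ∈ E) (hxhi : hi < ⟪μ, x⟫) (hv : v ∈ E)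
    (hvhi : ⟪μ, v⟫ ≤ hi) :
    ∃ t : ℝ, 0 < t ∧ t ≤ 1 ∧ t • v + (1 - t) • x ∈ {u ∈ E | lo ≤ ⟪μ, u⟫ ∧ ⟪μ, u⟫ ≤ hi} := by
  have hgap : 0 < ⟪μ, x⟫ - ⟪μ, v⟫ := by linarith
  obtain ⟨t, ht⟩ : ∃ t, t = (⟪μ, x⟫ - hi) / (⟪μ, x⟫ - ⟪μ, v⟫) := ⟨_, rfl⟩
  have ht0 : 0 < t := ht ▸ div_pos (by linarith) hgap
  have ht1 : t ≤ 1 := by rw [ht, div_le_one hgap]; linarith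
  have hlevel : ⟪μ, t • v + (1 - t) • x⟫ = hi := by
    rw [inner_add_right, real_inner_smul_right, real_inner_smul_right, ht]
    field_simp
    ring
  exact ⟨t, ht0, ht1, hE hv hx ht0.le (by linarith) (by ring),
    hlevel ▸ hlohi, hlevel.le⟩

lemma real_inner_sub_nonpos_of_smul_add_smul {x y v : V} {t : ℝ} (ht0 : 0 < t) (ht1 : t ≤ 1)
    (h : ⟪x - y, t • v + (1 - t) • x - y⟫ ≤ 0) : ⟪x - y, v - y⟫ ≤ 0 := by
  have hsplit : t • v + (1 - t) • x - y = t • (v - y) + (1 - t) • (x - y) := by module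
  rw [hsplit, inner_add_right, real_inner_smul_right, real_inner_smul_right] at h
  nlinarith [real_inner_self_nonneg (x := x - y)]

variable [CompleteSpace V] {E : Set V} {μ : V} {lo hi : ℝ} {x p : V}

theorem exists_nearest_mem_slab_of_lt (hE : Convex ℝ E) (hEc : IsClosed E) (hlohi : lo ≤ hi)
    (hx : x ∈ E) (hxhi : hi < ⟪μ, x⟫) (hp : p ∈ E) (hphi : ⟪μ, p⟫ ≤ hi) :
    ∃ y ∈ {u ∈ E | lo ≤ ⟪μ, u⟫ ∧ ⟪μ, u⟫ ≤ hi},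
      (∀ z ∈ {u ∈ E | lo ≤ ⟪μ, u⟫ ∧ ⟪μ, u⟫ ≤ hi}, dist x y ≤ dist x z) ∧
      ∀ v ∈ E, ⟪μ, v⟫ ≤ hi → ⟪x - y, v - y⟫ ≤ 0 := by
  obtain ⟨_, -, -, hne⟩ := exists_smul_add_smul_mem_slab hE hlohi hx hxhi hp hphi
  obtain ⟨y, hy, hnear, hvar⟩ := exists_nearest_real_inner_sub_nonpos ⟨_, hne⟩
    (isClosed_slab hEc μ lo hi).isComplete (convex_slab hE μ lo hi) x
  refine ⟨y, hy, hnear, fun v hv hvhi => ?_⟩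
  obtain ⟨t, ht0, ht1, hz⟩ := exists_smul_add_smul_mem_slab hE hlohi hx hxhi hv hvhi
  exact real_inner_sub_nonpos_of_smul_add_smul ht0 ht1 (hvar _ hz)

theorem exists_nearest_mem_slab_of_gt (hE : Convex ℝ E) (hEc : IsClosed E) (hlohi : lo ≤ hi)
    (hx : x ∈ E) (hxlo : ⟪μ, x⟫ < lo) (hp : p ∈ E) (hplo : lo ≤ ⟪μ, p⟫) :
    ∃ y ∈ {u ∈ E | lo ≤ ⟪μ, u⟫ ∧ ⟪μ, u⟫ ≤ hi},
      (∀ z ∈ {u ∈ E | lo ≤ ⟪μ, u⟫ ∧ ⟪μ, u⟫ ≤ hi}, dist x y ≤ dist x z) ∧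
      ∀ v ∈ E, lo ≤ ⟪μ, v⟫ → ⟪x - y, v - y⟫ ≤ 0 := by
  have h := exists_nearest_mem_slab_of_lt (μ := -μ) hE hEc (neg_le_neg hlohi) hx
    (by rwa [inner_neg_left, neg_lt_neg_iff]) hp (by rwa [inner_neg_left, neg_le_neg_iff])
  rw [slab_neg] at h
  simpa only [inner_neg_left, neg_le_neg_iff] using h

end Slab

theorem blackwell_corollary_general (N : ℕ) (A B : Type*) [Fintype A] [Fintype B]
    (U : A → B → EuclideanSpace ℝ (Fin N))
    (E : Set (EuclideanSpace ℝ (Fin N)))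
    (hE : E = convexHull ℝ {x | ∃ a b, x = U a b})
    (μ : EuclideanSpace ℝ (Fin N))
    (a₁ a₂ : A) (α β : ℝ)
    (ha₁ : ∀ b, ⟪μ, U a₁ b⟫ ≤ α) (ha₂ : ∀ b, β ≤ ⟪μ, U a₂ b⟫)
    (Q : EuclideanSpace ℝ (Fin N) → A → ℝ)
    (hQnonneg : ∀ u a, 0 ≤ Q u a) (hQsum : ∀ u, ∑ a, Q u a = 1)
    (hQ1 : ∀ u, α < ⟪μ, u⟫ → Q u a₁ = 1)
    (hQ2 : ∀ u, ⟪μ, u⟫ < β → Q u a₂ = 1)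
    (C : EuclideanSpace ℝ (Fin N) → Set (EuclideanSpace ℝ (Fin N)))
    (hC : ∀ u, C u = {v | ∃ ν : B → ℝ, (∀ b, 0 ≤ ν b) ∧ (∑ b, ν b = 1) ∧
      v = ∑ a, ∑ b, (Q u a * ν b) • U a b})
    (Λ : Set (EuclideanSpace ℝ (Fin N)))
    (hΛ : Λ = {u ∈ E | min α β ≤ ⟪μ, u⟫ ∧ ⟪μ, u⟫ ≤ max α β}) :
    (∀ u ∈ E, α < ⟪μ, u⟫ → ∀ v ∈ C u, ⟪μ, v⟫ ≤ α) ∧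
    (∀ u ∈ E, ⟪μ, u⟫ < β → ∀ v ∈ C u, β ≤ ⟪μ, v⟫) ∧
    (∀ x ∈ E, x ∉ Λ → ∃ y ∈ Λ, (∀ z ∈ Λ, dist x y ≤ dist x z) ∧
      ∀ v ∈ C x, ⟪x - y, v - y⟫ ≤ 0) := by
  have hEconv : Convex ℝ E := hE ▸ convex_convexHull ℝ _
  have hEc : IsClosed E := hE ▸ isClosed_convexHull_setOf_eq U
  have hUE : ∀ a b, U a b ∈ E := fun a b => hE ▸ subset_convexHull ℝ _ ⟨a, b, rfl⟩
  have hCE : ∀ u, ∀ v ∈ C u, v ∈ E := by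
    intro u v hv
    obtain ⟨ν, hν0, hνs, rfl⟩ := hC u ▸ hv
    exact sum_sum_mul_smul_mem hEconv (hQnonneg u) (hQsum u) hν0 hνs hUE
  have hC₁ : ∀ u, α < ⟪μ, u⟫ → ∀ v ∈ C u, ⟪μ, v⟫ ≤ α := by
    intro u hu v hv
    obtain ⟨ν, hν0, hνs, rfl⟩ := hC u ▸ hv
    exact sum_sum_mul_smul_mem_of_apply_eq_one
      (convex_halfSpace_le (isLinearMap_real_inner μ) α) (hQnonneg u) (hQsum u) (hQ1 u hu)
      hν0 hνs ha₁
  have hC₂ : ∀ u, ⟪μ, u⟫ < β → ∀ v ∈ C u, β ≤ ⟪μ, v⟫ := by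
    intro u hu v hv
    obtain ⟨ν, hν0, hνs, rfl⟩ := hC u ▸ hv
    exact sum_sum_mul_smul_mem_of_apply_eq_one
      (convex_halfSpace_ge (isLinearMap_real_inner μ) β) (hQnonneg u) (hQsum u) (hQ2 u hu)
      hν0 hνs ha₂
  refine ⟨fun u _ => hC₁ u, fun u _ => hC₂ u, fun x hx hxΛ => ?_⟩
  obtain ⟨_, a, b, -⟩ := (convexHull_nonempty_iff (𝕜 := ℝ)).1 ⟨x, hE ▸ hx⟩
  subst hΛ
  have hout : ⟪μ, x⟫ < min α β ∨ max α β < ⟪μ, x⟫ := by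
    by_contra! h
    exact hxΛ ⟨hx, h⟩
  rcases hout with hlt | hgt
  · obtain ⟨y, hy, hnear, hsep⟩ := exists_nearest_mem_slab_of_gt hEconv hEc min_le_max hx hlt
      (hUE a₂ b) ((min_le_right α β).trans (ha₂ b))
    refine ⟨y, hy, hnear, fun v hv => hsep v (hCE x v hv) ?_⟩
    exact (min_le_right α β).trans (hC₂ x (hlt.trans_le (min_le_right α β)) v hv)
  · obtain ⟨y, hy, hnear, hsep⟩ := exists_nearest_mem_slab_of_lt hEconv hEc min_le_max hx hgt
      (hUE a₁ b) ((ha₁ b).trans (le_max_left α β))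
    refine ⟨y, hy, hnear, fun v hv => hsep v (hCE x v hv) ?_⟩
    exact (hC₁ x ((le_max_left α β).trans_lt hgt) v hv).trans (le_max_left α β)

/-- Blackwell's corollary: if action `a₁` guarantees `μ(U(a₁,b)) ≤ α`, action `a₂`
guarantees `μ(U(a₂,b)) ≥ β`, and the payoff-based strategy `Q` plays `a₁` whenever
`μ(u) > α` and `a₂` whenever `μ(u) < β`, then `C(u)` lies in the appropriate half
space, and `Λ = {u ∈ E : μ(u) ∈ [min(α,β), max(α,β)]}` satisfies Blackwell's
separation condition (is a `B`-set). -/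
theorem blackwell_corollary (N : ℕ) (A B : Type*) [Fintype A] [Fintype B]
    (U : A → B → EuclideanSpace ℝ (Fin N))
    (E : Set (EuclideanSpace ℝ (Fin N)))
    (hE : E = convexHull ℝ {x | ∃ a b, x = U a b})
    (μ : EuclideanSpace ℝ (Fin N)) (hμ : μ ≠ 0)
    (a₁ a₂ : A) (α β : ℝ)
    (ha₁ : ∀ b, ⟪μ, U a₁ b⟫ ≤ α) (ha₂ : ∀ b, β ≤ ⟪μ, U a₂ b⟫)
    (Q : EuclideanSpace ℝ (Fin N) → A → ℝ)
    (hQnonneg : ∀ u a, 0 ≤ Q u a) (hQsum : ∀ u, ∑ a, Q u a = 1)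
    (hQ1 : ∀ u, α < ⟪μ, u⟫ → Q u a₁ = 1)
    (hQ2 : ∀ u, ⟪μ, u⟫ < β → Q u a₂ = 1)
    (C : EuclideanSpace ℝ (Fin N) → Set (EuclideanSpace ℝ (Fin N)))
    (hC : ∀ u, C u = {v | ∃ ν : B → ℝ, (∀ b, 0 ≤ ν b) ∧ (∑ b, ν b = 1) ∧
      v = ∑ a, ∑ b, (Q u a * ν b) • U a b})
    (Λ : Set (EuclideanSpace ℝ (Fin N)))
    (hΛ : Λ = {u ∈ E | min α β ≤ ⟪μ, u⟫ ∧ ⟪μ, u⟫ ≤ max α β}) :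
    (∀ u ∈ E, α < ⟪μ, u⟫ → ∀ v ∈ C u, ⟪μ, v⟫ ≤ α) ∧
    (∀ u ∈ E, ⟪μ, u⟫ < β → ∀ v ∈ C u, β ≤ ⟪μ, v⟫) ∧
    (∀ x ∈ E, x ∉ Λ → ∃ y ∈ Λ, (∀ z ∈ Λ, dist x y ≤ dist x z) ∧
      ∀ v ∈ C x, ⟪x - y, v - y⟫ ≤ 0) :=
  blackwell_corollary_general N A B U E hE μ a₁ a₂ α β ha₁ ha₂ Q hQnonneg hQsum hQ1 hQ2 C hC Λ hΛ
end
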